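/- Let 0 < α < 1/2, let θ*_A be a unit vector in ℝ², let s ∈ {−1, 1}, and define θ'_D = s · R θ*_A and θ'_A = (√(1 − 2α) · θ*_A − α s · R θ*_A)/(1 − α). Then ‖θ'_A‖ = 1, ‖θ'_D‖ = 1, α θ'_D + (1 − α) θ'_A = √(1 − 2α) · θ*_A, and consequently θ_C(θ'_A, θ'_D) = θ*_A. -/

import Mathlib

open Real

/-- The aggregate vector `(α θ_D + (1−α) θ_A)/‖α θ_D + (1−α) θ_A‖`. -/
noncomputable def aggregate (α : ℝ) (θA θD : EuclideanSpace ℝ (Fin 2)) :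
    EuclideanSpace ℝ (Fin 2) :=
  (‖α • θD + (1 - α) • θA‖)⁻¹ • (α • θD + (1 - α) • θA)

/-- Rotation by `π/2`: `R(x, y) = (−y, x)`. -/
noncomputable def Rot (x : EuclideanSpace ℝ (Fin 2)) : EuclideanSpace ℝ (Fin 2) :=
  (WithLp.equiv 2 (Fin 2 → ℝ)).symm ![-(x 1), x 0]

/-
The weighted sum is `√(1 − 2α) θ*_A` by construction, and since `θ*_A ⊥ R θ*_A`,
Pythagoras gives `‖√(1 − 2α) θ*_A − α s R θ*_A‖² = (1 − 2α) + α² = (1 − α)²`,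
so `θ'_A` is a unit vector.  Normalizing a positive multiple of `θ*_A` returns `θ*_A`.
-/

lemma norm_Rot (x : EuclideanSpace ℝ (Fin 2)) : ‖Rot x‖ = ‖x‖ := by
  simp only [Rot, EuclideanSpace.norm_eq, Fin.sum_univ_two]
  simp [add_comm]

lemma inner_self_Rot (x : EuclideanSpace ℝ (Fin 2)) : inner ℝ x (Rot x) = 0 := by
  simp [Rot, PiLp.inner_apply, Fin.sum_univ_two]
  ring

lemma norm_smul_sub_smul_Rot_sq (a b : ℝ) (x : EuclideanSpace ℝ (Fin 2)) :
    ‖a • x - b • Rot x‖ ^ 2 = (a ^ 2 + b ^ 2) * ‖x‖ ^ 2 := by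
  have horth : inner ℝ (a • x) (b • Rot x) = 0 := by
    rw [inner_smul_left, inner_smul_right, inner_self_Rot, mul_zero, mul_zero]
  rw [sq, norm_sub_sq_eq_norm_sq_add_norm_sq_real horth, norm_smul, norm_smul, norm_Rot,
    Real.norm_eq_abs, Real.norm_eq_abs]
  nlinarith [sq_abs a, sq_abs b]

lemma aggregate_eq_of_eq_smul {α c : ℝ} {θA θD u : EuclideanSpace ℝ (Fin 2)} (hc : 0 < c)
    (hu : ‖u‖ = 1) (h : α • θD + (1 - α) • θA = c • u) : aggregate α θA θD = u := by
  rw [aggregate, h, norm_smul, hu, mul_one, Real.norm_of_nonneg hc.le, smul_smul,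
    inv_mul_cancel₀ hc.ne', one_smul]

theorem stmt_15_general (α : ℝ) (hα' : α < 1 / 2)
    (θAstar : EuclideanSpace ℝ (Fin 2)) (hAs : ‖θAstar‖ = 1)
    (s : ℝ) (hs : s = -1 ∨ s = 1) :
    ‖(1 - α)⁻¹ • (Real.sqrt (1 - 2 * α) • θAstar - (α * s) • Rot θAstar)‖ = 1 ∧
    ‖s • Rot θAstar‖ = 1 ∧
    α • (s • Rot θAstar) +
        (1 - α) • ((1 - α)⁻¹ • (Real.sqrt (1 - 2 * α) • θAstar - (α * s) • Rot θAstar)) =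
      Real.sqrt (1 - 2 * α) • θAstar ∧
    aggregate α
        ((1 - α)⁻¹ • (Real.sqrt (1 - 2 * α) • θAstar - (α * s) • Rot θAstar))
        (s • Rot θAstar) = θAstar := by
  have h1α : 0 < 1 - α := by linarith
  have hsqrt : 0 < √(1 - 2 * α) := Real.sqrt_pos.mpr (by linarith)
  have hs_abs : |s| = 1 := by rcases hs with rfl | rfl <;> norm_num
  have hdiff : ‖√(1 - 2 * α) • θAstar - (α * s) • Rot θAstar‖ = 1 - α := by
    have hsq : ‖√(1 - 2 * α) • θAstar - (α * s) • Rot θAstar‖ ^ 2 = (1 - α) ^ 2 := by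
      rw [norm_smul_sub_smul_Rot_sq, hAs, Real.sq_sqrt (by linarith), mul_pow, ← sq_abs s,
        hs_abs]
      ring
    exact (pow_left_inj₀ (norm_nonneg _) h1α.le two_ne_zero).mp hsq
  have hsum : α • (s • Rot θAstar) + (1 - α) • ((1 - α)⁻¹ •
      (√(1 - 2 * α) • θAstar - (α * s) • Rot θAstar)) = √(1 - 2 * α) • θAstar := by
    rw [smul_inv_smul₀ h1α.ne', smul_smul]
    abel
  refine ⟨?_, ?_, hsum, aggregate_eq_of_eq_smul hsqrt hAs hsum⟩
  · rw [norm_smul, hdiff, norm_inv, Real.norm_of_nonneg h1α.le, inv_mul_cancel₀ h1α.ne']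
  · rw [norm_smul, norm_Rot, hAs, Real.norm_eq_abs, hs_abs, mul_one]

/-- Appendix G verification: the explicit equilibrium strategies are unit vectors, their
weighted sum is `√(1 − 2α) θ*_A`, and the resulting aggregate equals `θ*_A`. -/
theorem stmt_15 (α : ℝ) (hα : 0 < α) (hα' : α < 1 / 2)
    (θAstar : EuclideanSpace ℝ (Fin 2)) (hAs : ‖θAstar‖ = 1)
    (s : ℝ) (hs : s = -1 ∨ s = 1) :
    ‖(1 - α)⁻¹ • (Real.sqrt (1 - 2 * α) • θAstar - (α * s) • Rot θAstar)‖ = 1 ∧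
    ‖s • Rot θAstar‖ = 1 ∧
    α • (s • Rot θAstar) +
        (1 - α) • ((1 - α)⁻¹ • (Real.sqrt (1 - 2 * α) • θAstar - (α * s) • Rot θAstar)) =
      Real.sqrt (1 - 2 * α) • θAstar ∧
    aggregate α
        ((1 - α)⁻¹ • (Real.sqrt (1 - 2 * α) • θAstar - (α * s) • Rot θAstar))
        (s • Rot θAstar) = θAstar :=
  stmt_15_general α hα' θAstar hAs s hs
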